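/- arXiv:1903.00867 — 4 statements merged into one kernel-verified Lean document; each statement's English description precedes it below -/
import Mathlib

section
/- For a > 0 define v_a : ℝ → ℝ by v_a(x) = 2·arctan(x/a). Let n ≥ 1, let K, L ≥ 0 be natural numbers, let α > 0, β ∈ [0,1), a_1,…,a_K > 0, b_1,…,b_L > 0, and let μ = (μ_1,…,μ_n) ∈ ℤ^n with μ_1 > μ_2 > … > μ_n. Then there exists a unique ξ = (ξ_1,…,ξ_n) ∈ ℝ^n satisfying, for every j ∈ {1,…,n}, the system α ξ_j + Σ_{k=1}^K v_{a_k}(ξ_j) + Σ_{j′≠j} Σ_{l=1}^L v_{b_l}(ξ_j − ξ_{j′}) = 2π(μ_j + β). -/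
open Real Finset

/-- The rational function `v_a(x) = 2 arctan(x/a)`. -/
noncomputable def vRat (a x : ℝ) : ℝ := 2 * Real.arctan (x / a)

/-!
The system is the gradient equation `∇V = 0` of the potential `V` built from primitives of the
kernels. Since `α > 0` and the primitives are nonnegative, `V` is coercive, so it has a global
minimiser, which solves the system. Uniqueness is a maximum principle: if `x` and `y` are
solutions and `x j₀ - y j₀ > 0` is maximal, then by monotonicity of the kernels every term of the
`j₀`-th equation is at least as large for `x` as for `y`, and the linear term strictly larger.
-/

open Filter

section PairSystem

variable {ι : Type*} [Fintype ι]

/-- The pair term runs over all ordered pairs, diagonal included; for even `G` this is the paper's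
`∑_{j<j'} G (ξ j - ξ j')` up to the additive constant `(card ι / 2) * G 0`. -/
noncomputable def morsePotential (α : ℝ) (c : ι → ℝ) (F G : ℝ → ℝ) (ξ : ι → ℝ) : ℝ :=
  ∑ j, (α / 2 * ξ j ^ 2 - c j * ξ j + F (ξ j)) + 1 / 2 * ∑ j, ∑ j', G (ξ j - ξ j')

theorem continuous_morsePotential (α : ℝ) (c : ι → ℝ) {F G : ℝ → ℝ} (hF : Continuous F)
    (hG : Continuous G) : Continuous (morsePotential α c F G) := by
  unfold morsePotential
  fun_prop

theorem sq_norm_le_sum_sq (ξ : ι → ℝ) : ‖ξ‖ ^ 2 ≤ ∑ j, ξ j ^ 2 := by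
  have hsum : 0 ≤ ∑ j, ξ j ^ 2 := by positivity
  have : ‖ξ‖ ≤ √(∑ j, ξ j ^ 2) := (pi_norm_le_iff_of_nonneg (by positivity)).2 fun j =>
    Real.abs_le_sqrt (single_le_sum (fun i _ => sq_nonneg (ξ i)) (mem_univ j))
  calc ‖ξ‖ ^ 2 ≤ √(∑ j, ξ j ^ 2) ^ 2 := by gcongr
    _ = ∑ j, ξ j ^ 2 := Real.sq_sqrt hsum

theorem quadratic_lower_bound {α : ℝ} (hα : 0 < α) (c x : ℝ) :
    α / 4 * x ^ 2 - c ^ 2 / α ≤ α / 2 * x ^ 2 - c * x := by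
  have h : α / 2 * x ^ 2 - c * x - (α / 4 * x ^ 2 - c ^ 2 / α) = (α * x / 2 - c) ^ 2 / α := by
    field_simp
    ring
  have : 0 ≤ (α * x / 2 - c) ^ 2 / α := by positivity
  linarith

theorem morsePotential_lower_bound {α : ℝ} (hα : 0 < α) (c : ι → ℝ) {F G : ℝ → ℝ}
    (hF : ∀ x, 0 ≤ F x) (hG : ∀ x, 0 ≤ G x) (ξ : ι → ℝ) :
    α / 4 * ‖ξ‖ ^ 2 - ∑ j, c j ^ 2 / α ≤ morsePotential α c F G ξ := by
  have hpair : 0 ≤ 1 / 2 * ∑ j, ∑ j', G (ξ j - ξ j') := by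
    have : 0 ≤ ∑ j, ∑ j', G (ξ j - ξ j') := sum_nonneg fun j _ => sum_nonneg fun j' _ => hG _
    positivity
  calc α / 4 * ‖ξ‖ ^ 2 - ∑ j, c j ^ 2 / α ≤ ∑ j, (α / 4 * ξ j ^ 2 - c j ^ 2 / α) := by
        rw [sum_sub_distrib, ← mul_sum]
        gcongr
        exact sq_norm_le_sum_sq ξ
    _ ≤ ∑ j, (α / 2 * ξ j ^ 2 - c j * ξ j + F (ξ j)) := by
        gcongr with j
        linarith [quadratic_lower_bound hα (c j) (ξ j), hF (ξ j)]
    _ ≤ morsePotential α c F G ξ := le_add_of_nonneg_right hpair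

theorem tendsto_morsePotential_cocompact {α : ℝ} (hα : 0 < α) (c : ι → ℝ) {F G : ℝ → ℝ}
    (hF : ∀ x, 0 ≤ F x) (hG : ∀ x, 0 ≤ G x) :
    Tendsto (morsePotential α c F G) (cocompact (ι → ℝ)) atTop := by
  have hq : Tendsto (fun r : ℝ => α / 4 * r ^ 2 - ∑ j, c j ^ 2 / α) atTop atTop :=
    tendsto_atTop_add_const_right _ _
      ((tendsto_pow_atTop two_ne_zero).const_mul_atTop (by positivity))
  exact tendsto_atTop_mono (morsePotential_lower_bound hα c hF hG)
    (hq.comp tendsto_norm_cocompact_atTop)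

variable [DecidableEq ι]

def SolvesPairSystem (α : ℝ) (c : ι → ℝ) (f g : ℝ → ℝ) (ξ : ι → ℝ) : Prop :=
  ∀ j, α * ξ j + f (ξ j) + ∑ j' ∈ univ.erase j, g (ξ j - ξ j') = c j

theorem hasDerivAt_morsePotential_update (α : ℝ) (c : ι → ℝ) {F G f g : ℝ → ℝ}
    (hF : ∀ x, HasDerivAt F (f x) x) (hG : ∀ x, HasDerivAt G (g x) x)
    (hg : ∀ x, g (-x) = -g x) (ξ : ι → ℝ) (j : ι) :
    HasDerivAt (fun t => morsePotential α c F G (Function.update ξ j t))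
      (α * ξ j + f (ξ j) + ∑ j' ∈ univ.erase j, g (ξ j - ξ j') - c j) (ξ j) := by
  have hu : ∀ p,
      HasDerivAt (fun t => Function.update ξ j t p) ((Pi.single j 1 : ι → ℝ) p) (ξ j) :=
    hasDerivAt_pi.1 (hasDerivAt_update ξ j (ξ j))
  have hsingle := HasDerivAt.fun_sum fun p (_ : p ∈ univ) =>
    ((((hu p).pow 2).const_mul (α / 2)).sub ((hu p).const_mul (c p))).add ((hF _).comp _ (hu p))
  have hpair := HasDerivAt.fun_sum fun p (_ : p ∈ univ) => HasDerivAt.fun_sum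
    fun q (_ : q ∈ univ) => (hG _).comp _ ((hu p).sub (hu q))
  have h : HasDerivAt (fun t => morsePotential α c F G (Function.update ξ j t)) _ (ξ j) :=
    hsingle.add (hpair.const_mul (1 / 2))
  refine h.congr_deriv ?_
  -- `g` is odd: the pairs `(j, j')` and `(j', j)` contribute equally, the diagonal not at all.
  have hg0 : g 0 = 0 := by linarith [neg_zero (G := ℝ) ▸ hg 0]
  have hodd : ∀ p, g (ξ p - ξ j) = -g (ξ j - ξ p) := fun p => by rw [← hg, neg_sub]
  simp only [Nat.cast_ofNat, Function.update_eq_self, Nat.add_one_sub_one, pow_one,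
    Pi.single_apply, mul_ite, mul_one, mul_zero, sum_add_distrib, sum_sub_distrib, sum_ite_eq',
    mem_univ, ↓reduceIte, one_div, Pi.sub_apply, mul_sub, sum_ite_irrel, sum_const_zero, hodd,
    sub_neg_eq_add, sum_erase_eq_sub, sub_self, hg0, sub_zero]
  ring

theorem SolvesPairSystem.le {α : ℝ} (hα : 0 < α) {c : ι → ℝ} {f g : ℝ → ℝ} (hf : Monotone f)
    (hg : Monotone g) {x y : ι → ℝ} (hx : SolvesPairSystem α c f g x)
    (hy : SolvesPairSystem α c f g y) : x ≤ y := by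
  intro j
  obtain ⟨j₀, -, hj₀⟩ := exists_max_image univ (fun i => x i - y i) ⟨j, mem_univ j⟩
  suffices x j₀ - y j₀ ≤ 0 by linarith [hj₀ j (mem_univ j)]
  by_contra! hpos
  have hgap := mul_pos hα hpos
  have hself : f (y j₀) ≤ f (x j₀) := hf (by linarith)
  have hpair : ∑ j' ∈ univ.erase j₀, g (y j₀ - y j') ≤ ∑ j' ∈ univ.erase j₀, g (x j₀ - x j') :=
    sum_le_sum fun j' _ => hg (by linarith [hj₀ j' (mem_univ j')])
  linarith [hx j₀, hy j₀]

theorem solvesPairSystem_of_forall_le {α : ℝ} {c : ι → ℝ} {F G f g : ℝ → ℝ}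
    (hF : ∀ x, HasDerivAt F (f x) x) (hG : ∀ x, HasDerivAt G (g x) x)
    (hg : ∀ x, g (-x) = -g x) {ξ : ι → ℝ}
    (hξ : ∀ η, morsePotential α c F G ξ ≤ morsePotential α c F G η) :
    SolvesPairSystem α c f g ξ := by
  intro j
  have hmin : IsLocalMin (fun t => morsePotential α c F G (Function.update ξ j t)) (ξ j) :=
    Eventually.of_forall fun t => by simpa using hξ (Function.update ξ j t)
  have := hmin.hasDerivAt_eq_zero (hasDerivAt_morsePotential_update α c hF hG hg ξ j)
  linarith

theorem existsUnique_solvesPairSystem {α : ℝ} (hα : 0 < α) (c : ι → ℝ) {F G f g : ℝ → ℝ}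
    (hF : ∀ x, HasDerivAt F (f x) x) (hG : ∀ x, HasDerivAt G (g x) x)
    (hF₀ : ∀ x, 0 ≤ F x) (hG₀ : ∀ x, 0 ≤ G x) (hf : Monotone f) (hg : Monotone g)
    (hg_odd : ∀ x, g (-x) = -g x) :
    ∃! ξ, SolvesPairSystem α c f g ξ := by
  have hcont : Continuous (morsePotential α c F G) := continuous_morsePotential α c
    (continuous_iff_continuousAt.2 fun x => (hF x).continuousAt)
    (continuous_iff_continuousAt.2 fun x => (hG x).continuousAt)
  obtain ⟨ξ, hξ⟩ := hcont.exists_forall_le (tendsto_morsePotential_cocompact hα c hF₀ hG₀)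
  have hsol := solvesPairSystem_of_forall_le hF hG hg_odd hξ
  exact ⟨ξ, hsol, fun η hη => le_antisymm (hη.le hα hf hg hsol) (hsol.le hα hf hg hη)⟩

end PairSystem

noncomputable def vRatPrimitive (a x : ℝ) : ℝ := 2 * x * arctan (x / a) - a * log (1 + (x / a) ^ 2)

theorem hasDerivAt_vRatPrimitive {a : ℝ} (ha : a ≠ 0) (x : ℝ) :
    HasDerivAt (vRatPrimitive a) (vRat a x) x := by
  have hpos : 0 < 1 + (x / a) ^ 2 := by positivity
  have hdiv : HasDerivAt (fun t => t / a) (1 / a) x := by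
    simpa using (hasDerivAt_id x).div_const a
  have h := (((hasDerivAt_id x).const_mul 2).mul ((hasDerivAt_arctan _).comp x hdiv)).sub
    (HasDerivAt.const_mul a (((hdiv.pow 2).const_add 1).log hpos.ne'))
  refine h.congr_deriv ?_
  simp only [Function.comp_apply, id_eq, Pi.pow_apply, Nat.cast_ofNat, Nat.add_one_sub_one, pow_one,
    vRat]
  field_simp
  ring

theorem vRat_neg (a x : ℝ) : vRat a (-x) = -vRat a x := by
  simp [vRat, neg_div, arctan_neg]

theorem vRat_zero (a : ℝ) : vRat a 0 = 0 := by simp [vRat]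

theorem vRat_monotone {a : ℝ} (ha : 0 < a) : Monotone (vRat a) := fun x y hxy => by
  unfold vRat
  gcongr

theorem vRatPrimitive_nonneg {a : ℝ} (ha : 0 < a) (x : ℝ) : 0 ≤ vRatPrimitive a x := by
  have hderiv := hasDerivAt_vRatPrimitive ha.ne'
  have hcont : Continuous (vRatPrimitive a) :=
    continuous_iff_continuousAt.2 fun x => (hderiv x).continuousAt
  have h0 : vRatPrimitive a 0 = 0 := by simp [vRatPrimitive]
  rcases le_total 0 x with hx | hx
  · have := monotoneOn_of_hasDerivWithinAt_nonneg (convex_Ici 0) hcont.continuousOn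
      (fun t _ => (hderiv t).hasDerivWithinAt)
      (fun t ht => vRat_zero a ▸ vRat_monotone ha (interior_subset ht))
      Set.self_mem_Ici (Set.mem_Ici.2 hx) hx
    rwa [h0] at this
  · have := antitoneOn_of_hasDerivWithinAt_nonpos (convex_Iic 0) hcont.continuousOn
      (fun t _ => (hderiv t).hasDerivWithinAt)
      (fun t ht => (vRat_monotone ha (interior_subset ht : t ∈ Set.Iic 0)).trans_eq (vRat_zero a))
      (Set.mem_Iic.2 hx) Set.self_mem_Iic hx
    rwa [h0] at this

theorem ratA_exists_unique_general
    (n K L : ℕ)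
    (α β : ℝ) (hα : 0 < α)
    (a : Fin K → ℝ) (b : Fin L → ℝ)
    (ha : ∀ k, 0 < a k) (hb : ∀ l, 0 < b l)
    (μ : Fin n → ℤ) :
    ∃! ξ : Fin n → ℝ, ∀ j : Fin n,
      α * ξ j + (∑ k, vRat (a k) (ξ j)) +
      (∑ j' ∈ Finset.univ.erase j, ∑ l, vRat (b l) (ξ j - ξ j'))
      = 2 * π * ((μ j : ℝ) + β) :=
  existsUnique_solvesPairSystem hα (fun j => 2 * π * ((μ j : ℝ) + β))
    (fun x => HasDerivAt.fun_sum fun k _ => hasDerivAt_vRatPrimitive (ha k).ne' x)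
    (fun x => HasDerivAt.fun_sum fun l _ => hasDerivAt_vRatPrimitive (hb l).ne' x)
    (fun x => sum_nonneg fun k _ => vRatPrimitive_nonneg (ha k) x)
    (fun x => sum_nonneg fun l _ => vRatPrimitive_nonneg (hb l) x)
    (fun _ _ h => sum_le_sum fun k _ => vRat_monotone (ha k) h)
    (fun _ _ h => sum_le_sum fun l _ => vRat_monotone (hb l) h)
    (fun x => by simp only [vRat_neg, sum_neg_distrib])

/-- Existence and uniqueness of the solution of the rational type A Bethe
critical-point system. -/
theorem ratA_exists_unique
    (n K L : ℕ) (hn : 1 ≤ n)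
    (α β : ℝ) (hα : 0 < α) (hβ0 : 0 ≤ β) (hβ1 : β < 1)
    (a : Fin K → ℝ) (b : Fin L → ℝ)
    (ha : ∀ k, 0 < a k) (hb : ∀ l, 0 < b l)
    (μ : Fin n → ℤ) (hμ : ∀ j j' : Fin n, j < j' → μ j' < μ j) :
    ∃! ξ : Fin n → ℝ, ∀ j : Fin n,
      α * ξ j + (∑ k, vRat (a k) (ξ j)) +
      (∑ j' ∈ Finset.univ.erase j, ∑ l, vRat (b l) (ξ j - ξ j'))
      = 2 * π * ((μ j : ℝ) + β) :=
  ratA_exists_unique_general n K L α β hα a b ha hb μ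
end

section
/- For a > 0 define v_a : ℝ → ℝ by v_a(x) = 2·arctan(x/a). Let n ≥ 1, let K, L ≥ 0 be natural numbers, let α > 0, β ∈ [0,1), a_1,…,a_K > 0, b_1,…,b_L > 0, and let μ = (μ_1,…,μ_n) ∈ ℤ^n with μ_1 > μ_2 > … > μ_n. If ξ = (ξ_1,…,ξ_n) ∈ ℝ^n satisfies, for every j ∈ {1,…,n}, the equation α ξ_j + Σ_{k=1}^K v_{a_k}(ξ_j) + Σ_{j′≠j} Σ_{l=1}^L v_{b_l}(ξ_j − ξ_{j′}) = 2π(μ_j + β), then ξ satisfies the rational Bethe equations of type A: for every j ∈ {1,…,n}, exp(i α ξ_j) = exp(2πi β) · ∏_{k=1}^K (i a_k + ξ_j)/(i a_k − ξ_j) · ∏_{j′≠j} ∏_{l=1}^L (i b_l + ξ_j − ξ_{j′})/(i b_l − ξ_j + ξ_{j′}) as an identity of complex numbers. -/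
open Real Finset

/-!
Since `2 arctan` is the argument of `(1 + x i)/(1 - x i)`, exponentiating `-i v_a(x)` gives the
Möbius factor `(i a + x)/(i a - x)`. Multiplying the critical-point equation for `ξ_j` by `i` and
exponentiating therefore turns its sums of `v`'s into the products of the Bethe equation, while
the right-hand side `2π(μ_j + β)` contributes `exp(2πiβ)` because `μ_j` is an integer.
-/

open Complex in
theorem Complex.exp_two_mul_arctan_mul_I (x : ℝ) :
    exp (2 * (Real.arctan x * I)) = (1 + x * I) / (1 - x * I) := by
  have hnum : (1 + x * I : ℂ) ≠ 0 := fun h => by simpa using congrArg re h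
  have hden : (1 - x * I : ℂ) ≠ 0 := fun h => by simpa using congrArg re h
  rw [ofReal_arctan, arctan]
  conv_rhs => rw [← exp_log (div_ne_zero hnum hden)]
  congr 1
  linear_combination (-log ((1 + x * I) / (1 - x * I))) * I_sq

open Complex in
theorem exp_neg_I_mul_vRat {a : ℝ} (ha : a ≠ 0) (x : ℝ) :
    exp (-(I * vRat a x)) = (I * a + x) / (I * a - x) := by
  have ha' : (a : ℂ) ≠ 0 := ofReal_ne_zero.mpr ha
  have hden : (1 + ↑(x / a) * I : ℂ) ≠ 0 := fun h => by simpa using congrArg re h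
  rw [vRat, show -(I * ↑(2 * Real.arctan (x / a))) = -(2 * (Real.arctan (x / a) * I)) by
      push_cast; ring,
    Complex.exp_neg, exp_two_mul_arctan_mul_I, inv_div, div_eq_div_iff hden
      fun h => ha (by simpa using congrArg im h)]
  push_cast
  field_simp
  linear_combination (-2 * a * x : ℂ) * I_sq

open Complex in
theorem exp_neg_I_mul_sum {ι : Type*} (s : Finset ι) (f : ι → ℝ) :
    exp (-(I * ↑(∑ i ∈ s, f i))) = ∏ i ∈ s, exp (-(I * f i)) := by
  rw [← Complex.exp_sum]
  push_cast
  rw [mul_sum, ← sum_neg_distrib]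

theorem ratA_critical_solves_bethe_general
    (n K L : ℕ)
    (α β : ℝ)
    (a : Fin K → ℝ) (b : Fin L → ℝ)
    (ha : ∀ k, 0 < a k) (hb : ∀ l, 0 < b l)
    (μ : Fin n → ℤ)
    (ξ : Fin n → ℝ)
    (hξ : ∀ j : Fin n,
      α * ξ j + (∑ k, vRat (a k) (ξ j)) +
      (∑ j' ∈ Finset.univ.erase j, ∑ l, vRat (b l) (ξ j - ξ j'))
      = 2 * π * ((μ j : ℝ) + β)) :
    ∀ j : Fin n,
      Complex.exp (Complex.I * (α : ℂ) * (ξ j : ℂ)) =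
      Complex.exp (2 * π * Complex.I * (β : ℂ)) *
      (∏ k, (Complex.I * (a k : ℂ) + (ξ j : ℂ)) / (Complex.I * (a k : ℂ) - (ξ j : ℂ))) *
      (∏ j' ∈ Finset.univ.erase j, ∏ l,
        (Complex.I * (b l : ℂ) + (ξ j : ℂ) - (ξ j' : ℂ)) /
        (Complex.I * (b l : ℂ) - (ξ j : ℂ) + (ξ j' : ℂ))) := by
  intro j
  set Sa := ∑ k, vRat (a k) (ξ j)
  set Sb := ∑ j' ∈ univ.erase j, ∑ l, vRat (b l) (ξ j - ξ j')
  have hphase : Complex.I * α * ξ j = μ j * (2 * π * Complex.I) + 2 * π * Complex.I * β +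
      -(Complex.I * Sa) + -(Complex.I * Sb) := by
    have : α * ξ j = 2 * π * ((μ j : ℝ) + β) - Sa - Sb := by linarith [hξ j]
    rw [mul_assoc, ← Complex.ofReal_mul, this]
    push_cast
    ring
  rw [hphase, Complex.exp_add, Complex.exp_add, Complex.exp_add,
    Complex.exp_int_mul_two_pi_mul_I, one_mul, exp_neg_I_mul_sum, exp_neg_I_mul_sum]
  congr 2
  · exact Finset.prod_congr rfl fun k _ => exp_neg_I_mul_vRat (ha k).ne' (ξ j)
  · funext j'
    rw [exp_neg_I_mul_sum]
    refine prod_congr rfl fun l _ => ?_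
    rw [exp_neg_I_mul_vRat (hb l).ne', Complex.ofReal_sub]
    ring

/-- Solutions of the rational type A critical-point system solve the rational Bethe
Ansatz equations of type A. -/
theorem ratA_critical_solves_bethe
    (n K L : ℕ) (hn : 1 ≤ n)
    (α β : ℝ) (hα : 0 < α) (hβ0 : 0 ≤ β) (hβ1 : β < 1)
    (a : Fin K → ℝ) (b : Fin L → ℝ)
    (ha : ∀ k, 0 < a k) (hb : ∀ l, 0 < b l)
    (μ : Fin n → ℤ) (hμ : ∀ j j' : Fin n, j < j' → μ j' < μ j)
    (ξ : Fin n → ℝ)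
    (hξ : ∀ j : Fin n,
      α * ξ j + (∑ k, vRat (a k) (ξ j)) +
      (∑ j' ∈ Finset.univ.erase j, ∑ l, vRat (b l) (ξ j - ξ j'))
      = 2 * π * ((μ j : ℝ) + β)) :
    ∀ j : Fin n,
      Complex.exp (Complex.I * (α : ℂ) * (ξ j : ℂ)) =
      Complex.exp (2 * π * Complex.I * (β : ℂ)) *
      (∏ k, (Complex.I * (a k : ℂ) + (ξ j : ℂ)) / (Complex.I * (a k : ℂ) - (ξ j : ℂ))) *
      (∏ j' ∈ Finset.univ.erase j, ∏ l,
        (Complex.I * (b l : ℂ) + (ξ j : ℂ) - (ξ j' : ℂ)) /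
        (Complex.I * (b l : ℂ) - (ξ j : ℂ) + (ξ j' : ℂ))) :=
  ratA_critical_solves_bethe_general n K L α β a b ha hb μ ξ hξ
end

section
/- For r > 0 and σ ∈ {1, −1} define v_{r,σ} : ℝ → ℝ by v_{r,σ}(x) = ∫_0^x sinh(r)/(cosh(r) − σ·cos y) dy. Let n ≥ 1, let K, L ≥ 0 be natural numbers, let α > 0, β ∈ [0,1), r_1,…,r_K > 0, s_1,…,s_L > 0 and σ_1,…,σ_K, τ_1,…,τ_L ∈ {1,−1}, and let μ = (μ_1,…,μ_n) ∈ ℤ^n with μ_1 > μ_2 > … > μ_n. If ξ = (ξ_1,…,ξ_n) ∈ ℝ^n satisfies, for every j ∈ {1,…,n}, the equation α ξ_j + Σ_{k=1}^K v_{r_k,σ_k}(ξ_j) + Σ_{j′≠j} Σ_{l=1}^L v_{s_l,τ_l}(ξ_j − ξ_{j′}) = 2π(μ_j + β), then for all 1 ≤ j < j′ ≤ n one has 2π(μ_j − μ_{j′})/(α + κ₋) ≤ ξ_j − ξ_{j′} ≤ 2π(μ_j − μ_{j′})/(α + κ₊), where κ₋ = Σ_{k=1}^K coth(r_k/2) +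 n Σ_{l=1}^L coth(s_l/2) and κ₊ = Σ_{k=1}^K tanh(r_k/2) + n Σ_{l=1}^L tanh(s_l/2). -/
open Real Finset

/-- The trigonometric function `v_{r,σ}(x) = ∫_0^x sinh r / (cosh r − σ cos y) dy`. -/
noncomputable def vTrig (r σ x : ℝ) : ℝ :=
  ∫ y in (0:ℝ)..x, Real.sinh r / (Real.cosh r - σ * Real.cos y)

/-! The integrand `sinh r / (cosh r - σ cos y)` of `vTrig r σ` lies between `tanh (r/2)` and
`coth (r/2)`, so `vTrig r σ` has all difference quotients in `[tanh (r/2), coth (r/2)]`. Such slope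
bounds add up: the left-hand side of the `j`-th equation is `F (ξ j)` minus a constant, where
`F x = α x + ∑ₖ v_{r_k,σ_k}(x) + ∑_{j'} ∑ₗ v_{s_l,τ_l}(x - ξ_{j'})` has difference quotients in
`[α + κ₊, α + κ₋]`; adding the missing term `j' = j`, which is the constant `∑ₗ v_{s_l,τ_l}(0)`,
is what turns the pair interaction into `n` copies of `∑ₗ v_{s_l,τ_l}`. Hence
`F (ξ j) - F (ξ j') = 2π (μ_j - μ_{j'})` pins down `ξ j - ξ j'`. -/

def SlopeBetween (m M : ℝ) (f : ℝ → ℝ) : Prop :=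
  ∀ ⦃x y⦄, y ≤ x → m * (x - y) ≤ f x - f y ∧ f x - f y ≤ M * (x - y)

namespace SlopeBetween

variable {m M m' M' : ℝ} {f g : ℝ → ℝ}

theorem le (hf : SlopeBetween m M f) : m ≤ M := by
  simpa using (hf zero_le_one).1.trans (hf zero_le_one).2

theorem const_mul (a : ℝ) : SlopeBetween a a (fun x => a * x) :=
  fun x y _ => by constructor <;> linarith

theorem add (hf : SlopeBetween m M f) (hg : SlopeBetween m' M' g) :
    SlopeBetween (m + m') (M + M') (fun x => f x + g x) := by
  intro x y hxy
  obtain ⟨hf₁, hf₂⟩ := hf hxy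
  obtain ⟨hg₁, hg₂⟩ := hg hxy
  constructor <;> linarith

theorem sum {ι : Type*} (s : Finset ι) {m M : ι → ℝ} {f : ι → ℝ → ℝ}
    (hf : ∀ i ∈ s, SlopeBetween (m i) (M i) (f i)) :
    SlopeBetween (∑ i ∈ s, m i) (∑ i ∈ s, M i) (fun x => ∑ i ∈ s, f i x) := by
  intro x y hxy
  simp only [← Finset.sum_sub_distrib, Finset.sum_mul]
  exact ⟨Finset.sum_le_sum fun i hi => (hf i hi hxy).1,
    Finset.sum_le_sum fun i hi => (hf i hi hxy).2⟩

theorem comp_sub_const (hf : SlopeBetween m M f) (c : ℝ) :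
    SlopeBetween m M (fun x => f (x - c)) := by
  intro x y hxy
  simpa using hf (sub_le_sub_right hxy c)

theorem div_le_sub_and_sub_le_div (hf : SlopeBetween m M f) (hm : 0 < m) {x y c : ℝ}
    (hc : 0 ≤ c) (hxy : f x - f y = c) : c / M ≤ x - y ∧ x - y ≤ c / m := by
  have hyx : y ≤ x := by
    by_contra! hlt
    have := (hf hlt.le).1
    have := mul_pos hm (sub_pos.2 hlt)
    linarith
  obtain ⟨h₁, h₂⟩ := hf hyx
  rw [div_le_iff₀ (hm.trans_le hf.le), le_div_iff₀ hm]
  constructor <;> linarith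

end SlopeBetween

theorem slopeBetween_integral {f : ℝ → ℝ} {m M : ℝ} (hf : Continuous f)
    (hmf : ∀ y, m ≤ f y) (hfM : ∀ y, f y ≤ M) :
    SlopeBetween m M (fun x => ∫ y in (0 : ℝ)..x, f y) := by
  intro x y hxy
  rw [intervalIntegral.integral_interval_sub_left (hf.intervalIntegrable _ _)
    (hf.intervalIntegrable _ _)]
  constructor
  · simpa [mul_comm] using intervalIntegral.integral_mono_on (μ := MeasureTheory.volume) hxy
      intervalIntegrable_const (hf.intervalIntegrable _ _) fun t _ => hmf t
  · simpa [mul_comm] using intervalIntegral.integral_mono_on (μ := MeasureTheory.volume) hxy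
      (hf.intervalIntegrable _ _) intervalIntegrable_const fun t _ => hfM t

theorem Real.tanh_pos {x : ℝ} (hx : 0 < x) : 0 < tanh x := by
  rw [tanh_eq_sinh_div_cosh]
  exact div_pos (sinh_pos_iff.2 hx) (cosh_pos x)

theorem Real.sinh_div_cosh_add_one (x : ℝ) : sinh x / (cosh x + 1) = tanh (x / 2) := by
  obtain ⟨t, rfl⟩ : ∃ t, x = 2 * t := ⟨x / 2, by ring⟩
  have hden : cosh t ^ 2 + sinh t ^ 2 + 1 = 2 * cosh t ^ 2 := by
    linear_combination -cosh_sq t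
  rw [sinh_two_mul, cosh_two_mul, hden, tanh_eq_sinh_div_cosh,
    mul_div_cancel_left₀ t two_ne_zero]
  field_simp

theorem Real.sinh_div_cosh_sub_one {x : ℝ} (hx : x ≠ 0) :
    sinh x / (cosh x - 1) = (tanh (x / 2))⁻¹ := by
  obtain ⟨t, rfl⟩ : ∃ t, x = 2 * t := ⟨x / 2, by ring⟩
  have hs : sinh t ≠ 0 := by simpa using hx
  have hden : cosh t ^ 2 + sinh t ^ 2 - 1 = 2 * sinh t ^ 2 := by
    linear_combination cosh_sq t
  rw [sinh_two_mul, cosh_two_mul, hden, tanh_eq_sinh_div_cosh,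
    mul_div_cancel_left₀ t two_ne_zero]
  field_simp

section vTrig

variable {r σ : ℝ}

theorem abs_mul_cos_le_one (hσ : |σ| ≤ 1) (y : ℝ) : |σ * cos y| ≤ 1 := by
  rw [abs_mul]
  exact mul_le_one₀ hσ (abs_nonneg _) (abs_cos_le_one y)

theorem cosh_sub_mul_cos_pos (hr : 0 < r) (hσ : |σ| ≤ 1) (y : ℝ) :
    0 < cosh r - σ * cos y := by
  have := (abs_le.1 (abs_mul_cos_le_one hσ y)).2
  linarith [one_lt_cosh.2 hr.ne']

theorem sinh_div_cosh_sub_mul_cos_mem_Icc (hr : 0 < r) (hσ : |σ| ≤ 1) (y : ℝ) :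
    sinh r / (cosh r - σ * cos y) ∈ Set.Icc (tanh (r / 2)) (tanh (r / 2))⁻¹ := by
  obtain ⟨h₁, h₂⟩ := abs_le.1 (abs_mul_cos_le_one hσ y)
  have hcosh := one_lt_cosh.2 hr.ne'
  have hsinh := (sinh_pos_iff.2 hr).le
  have hpos := cosh_sub_mul_cos_pos hr hσ y
  rw [← sinh_div_cosh_sub_one hr.ne', ← sinh_div_cosh_add_one]
  exact ⟨div_le_div_of_nonneg_left hsinh hpos (by linarith),
    div_le_div_of_nonneg_left hsinh (by linarith) (by linarith)⟩

theorem slopeBetween_vTrig (hr : 0 < r) (hσ : |σ| ≤ 1) :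
    SlopeBetween (tanh (r / 2)) (tanh (r / 2))⁻¹ (vTrig r σ) :=
  slopeBetween_integral
    (continuous_const.div (by fun_prop) fun y => (cosh_sub_mul_cos_pos hr hσ y).ne')
    (fun y => (sinh_div_cosh_sub_mul_cos_mem_Icc hr hσ y).1)
    (fun y => (sinh_div_cosh_sub_mul_cos_mem_Icc hr hσ y).2)

end vTrig

theorem trigA_gap_bounds_general
    (n K L : ℕ)
    (α β : ℝ) (hα : 0 < α)
    (r : Fin K → ℝ) (σ : Fin K → ℝ) (s : Fin L → ℝ) (τ : Fin L → ℝ)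
    (hr : ∀ k, 0 < r k) (hs : ∀ l, 0 < s l)
    (hσ : ∀ k, σ k = 1 ∨ σ k = -1) (hτ : ∀ l, τ l = 1 ∨ τ l = -1)
    (μ : Fin n → ℤ) (hμ : ∀ j j' : Fin n, j < j' → μ j' < μ j)
    (ξ : Fin n → ℝ)
    (hξ : ∀ j : Fin n,
      α * ξ j + (∑ k, vTrig (r k) (σ k) (ξ j)) +
      (∑ j' ∈ Finset.univ.erase j, ∑ l, vTrig (s l) (τ l) (ξ j - ξ j'))
      = 2 * π * ((μ j : ℝ) + β))
    (κm κp : ℝ)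
    (hκm : κm = (∑ k, (Real.tanh (r k / 2))⁻¹) +
      (n : ℝ) * (∑ l, (Real.tanh (s l / 2))⁻¹))
    (hκp : κp = (∑ k, Real.tanh (r k / 2)) +
      (n : ℝ) * (∑ l, Real.tanh (s l / 2))) :
    ∀ j j' : Fin n, j < j' →
      2 * π * ((μ j : ℝ) - (μ j' : ℝ)) / (α + κm) ≤ ξ j - ξ j' ∧
      ξ j - ξ j' ≤ 2 * π * ((μ j : ℝ) - (μ j' : ℝ)) / (α + κp) := by
  intro j j' hjj'
  have habs : ∀ {a : ℝ}, a = 1 ∨ a = -1 → |a| ≤ 1 := by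
    rintro a (rfl | rfl) <;> simp
  set F : ℝ → ℝ := fun x => α * x + ∑ k, vTrig (r k) (σ k) x +
    ∑ i, ∑ l, vTrig (s l) (τ l) (x - ξ i)
  have hFslope : SlopeBetween (α + κp) (α + κm) F := by
    have hpair := SlopeBetween.sum univ fun i _ =>
      (SlopeBetween.sum univ fun l _ => slopeBetween_vTrig (hs l) (habs (hτ l))).comp_sub_const (ξ i)
    simp only [sum_const, card_univ, Fintype.card_fin, nsmul_eq_mul] at hpair
    rw [hκp, hκm, ← add_assoc, ← add_assoc]
    exact ((SlopeBetween.const_mul α).add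
      (SlopeBetween.sum univ fun k _ => slopeBetween_vTrig (hr k) (habs (hσ k)))).add hpair
  have hFξ : ∀ i, F (ξ i) = 2 * π * ((μ i : ℝ) + β) + ∑ l, vTrig (s l) (τ l) 0 := by
    intro i
    rw [← hξ i, sum_erase_eq_sub (mem_univ i), sub_self]
    ring
  have hκp_pos : 0 < α + κp := by
    have htanh {x : ℝ} (hx : 0 < x) : 0 ≤ tanh (x / 2) := (tanh_pos (half_pos hx)).le
    rw [hκp]
    exact add_pos_of_pos_of_nonneg hα (add_nonneg (sum_nonneg fun k _ => htanh (hr k))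
      (mul_nonneg n.cast_nonneg (sum_nonneg fun l _ => htanh (hs l))))
  have hμ_nonneg : 0 ≤ 2 * π * ((μ j : ℝ) - μ j') :=
    mul_nonneg (by positivity) (sub_nonneg.2 (by exact_mod_cast (hμ j j' hjj').le))
  exact hFslope.div_le_sub_and_sub_le_div hκp_pos hμ_nonneg (by rw [hFξ, hFξ]; ring)

/-- Trigonometric Bethe bounds of type A: gap estimates for the solutions of the
trigonometric type A critical-point system. -/
theorem trigA_gap_bounds
    (n K L : ℕ) (hn : 1 ≤ n)
    (α β : ℝ) (hα : 0 < α) (hβ0 : 0 ≤ β) (hβ1 : β < 1)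
    (r : Fin K → ℝ) (σ : Fin K → ℝ) (s : Fin L → ℝ) (τ : Fin L → ℝ)
    (hr : ∀ k, 0 < r k) (hs : ∀ l, 0 < s l)
    (hσ : ∀ k, σ k = 1 ∨ σ k = -1) (hτ : ∀ l, τ l = 1 ∨ τ l = -1)
    (μ : Fin n → ℤ) (hμ : ∀ j j' : Fin n, j < j' → μ j' < μ j)
    (ξ : Fin n → ℝ)
    (hξ : ∀ j : Fin n,
      α * ξ j + (∑ k, vTrig (r k) (σ k) (ξ j)) +
      (∑ j' ∈ Finset.univ.erase j, ∑ l, vTrig (s l) (τ l) (ξ j - ξ j'))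
      = 2 * π * ((μ j : ℝ) + β))
    (κm κp : ℝ)
    (hκm : κm = (∑ k, (Real.tanh (r k / 2))⁻¹) +
      (n : ℝ) * (∑ l, (Real.tanh (s l / 2))⁻¹))
    (hκp : κp = (∑ k, Real.tanh (r k / 2)) +
      (n : ℝ) * (∑ l, Real.tanh (s l / 2))) :
    ∀ j j' : Fin n, j < j' →
      2 * π * ((μ j : ℝ) - (μ j' : ℝ)) / (α + κm) ≤ ξ j - ξ j' ∧
      ξ j - ξ j' ≤ 2 * π * ((μ j : ℝ) - (μ j' : ℝ)) / (α + κp) :=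
  trigA_gap_bounds_general n K L α β hα r σ s τ hr hs hσ hτ μ hμ ξ hξ κm κp hκm hκp
end

section
/- For r > 0 and σ ∈ {1, −1} define v_{r,σ} : ℝ → ℝ by v_{r,σ}(x) = ∫_0^x sinh(r)/(cosh(r) − σ·cos y) dy. Let n ≥ 1, let K, L ≥ 0 be natural numbers, let α > 0, ε ∈ {0,1}, r_1,…,r_K > 0, s_1,…,s_L > 0 and σ_1,…,σ_K, τ_1,…,τ_L ∈ {1,−1}, and let μ = (μ_1,…,μ_n) ∈ ℤ^n with μ_1 > μ_2 > … > μ_n > 0. If ξ = (ξ_1,…,ξ_n) ∈ ℝ^n satisfies, for every j ∈ {1,…,n}, the equation 2α ξ_j + Σ_{k=1}^K v_{r_k,σ_k}(ξ_j) + Σ_{j′≠j} Σ_{l=1}^L ( v_{s_l,τ_l}(ξ_{j′} + ξ_j) − v_{s_l,τ_l}(ξ_{j′} − ξ_j) ) = 2π(μ_j + ε/2), then for all 1 ≤ j ≤ n one has π(μ_j + ε/2)/(α + κ₋) ≤ ξ_j ≤ π(μ_j + ε/2)/(α + κ₊), and for all 1 ≤ j < j′ ≤ n one has π(μ_j − μ_{j′})/(α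 + κ₋) ≤ ξ_j − ξ_{j′} ≤ π(μ_j − μ_{j′})/(α + κ₊), where κ₋ = (1/2) Σ_{k=1}^K coth(r_k/2) + (n−1) Σ_{l=1}^L coth(s_l/2) and κ₊ = (1/2) Σ_{k=1}^K tanh(r_k/2) + (n−1) Σ_{l=1}^L tanh(s_l/2). -/
open Real Finset

lemma trigB_tanh_pos {r : ℝ} (hr : 0 < r) : 0 < Real.tanh (r / 2) := by
  rw [Real.tanh_eq_sinh_div_cosh]
  exact div_pos (Real.sinh_pos_iff.mpr (by linarith)) (Real.cosh_pos _)

lemma trigB_denom_pos {r σ : ℝ} (hr : 0 < r) (hσ : σ = 1 ∨ σ = -1) (y : ℝ) :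
    0 < Real.cosh r - σ * Real.cos y := by
  have h1 : 1 < Real.cosh r := Real.one_lt_cosh.mpr (ne_of_gt hr)
  have h2 := Real.neg_one_le_cos y
  have h3 := Real.cos_le_one y
  rcases hσ with h | h <;> subst h <;> nlinarith

lemma trigB_integrand_bounds {r σ : ℝ} (hr : 0 < r) (hσ : σ = 1 ∨ σ = -1) (y : ℝ) :
    Real.tanh (r/2) ≤ Real.sinh r / (Real.cosh r - σ * Real.cos y) ∧
    Real.sinh r / (Real.cosh r - σ * Real.cos y) ≤ (Real.tanh (r/2))⁻¹ := by
  have hs2 : 0 < Real.sinh (r/2) := Real.sinh_pos_iff.mpr (by linarith)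
  have hc2 : 0 < Real.cosh (r/2) := Real.cosh_pos _
  have hd := trigB_denom_pos hr hσ y
  have h2 := Real.neg_one_le_cos y
  have h3 := Real.cos_le_one y
  have hσ1 : -1 ≤ σ * Real.cos y ∧ σ * Real.cos y ≤ 1 := by
    rcases hσ with h | h <;> subst h <;> constructor <;> nlinarith
  have ht : Real.tanh (r/2) = Real.sinh (r/2) / Real.cosh (r/2) := Real.tanh_eq_sinh_div_cosh _
  have hcoshr : Real.cosh r = Real.cosh (r/2)^2 + Real.sinh (r/2)^2 := by
    have h := Real.cosh_two_mul (r/2); rw [show 2*(r/2) = r by ring] at h; linarith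
  have hsinhr : Real.sinh r = 2 * Real.sinh (r/2) * Real.cosh (r/2) := by
    have h := Real.sinh_two_mul (r/2); rw [show 2*(r/2) = r by ring] at h; linarith
  have hcs := Real.cosh_sq (r/2)
  constructor
  · rw [ht, div_le_div_iff₀ hc2 hd, hsinhr, hcoshr]
    nlinarith [hσ1.1, hs2, hc2]
  · rw [ht, inv_div, div_le_div_iff₀ hd hs2, hsinhr, hcoshr]
    nlinarith [hσ1.2, hs2, hc2]

lemma trigB_sub_bounds {r σ : ℝ} (hr : 0 < r) (hσ : σ = 1 ∨ σ = -1) {a b : ℝ} (hab : b ≤ a) :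
    Real.tanh (r/2) * (a - b) ≤ vTrig r σ a - vTrig r σ b ∧
    vTrig r σ a - vTrig r σ b ≤ (Real.tanh (r/2))⁻¹ * (a - b) := by
  have hcont : Continuous (fun y => Real.sinh r / (Real.cosh r - σ * Real.cos y)) :=
    continuous_const.div (by fun_prop) (fun y => ne_of_gt (trigB_denom_pos hr hσ y))
  have hint : ∀ u v : ℝ, IntervalIntegrable (fun y => Real.sinh r / (Real.cosh r - σ * Real.cos y))
      MeasureTheory.volume u v := fun u v => hcont.intervalIntegrable u v
  have hdiff : vTrig r σ a - vTrig r σ b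
      = ∫ y in b..a, Real.sinh r / (Real.cosh r - σ * Real.cos y) :=
    intervalIntegral.integral_interval_sub_left (hint 0 a) (hint 0 b)
  constructor
  · rw [hdiff]
    have h := intervalIntegral.integral_mono_on hab intervalIntegrable_const (hint b a)
      (fun y _ => (trigB_integrand_bounds hr hσ y).1)
    rw [intervalIntegral.integral_const, smul_eq_mul] at h
    linarith
  · rw [hdiff]
    have h := intervalIntegral.integral_mono_on hab (hint b a) intervalIntegrable_const
      (fun y _ => (trigB_integrand_bounds hr hσ y).2)
    rw [intervalIntegral.integral_const, smul_eq_mul] at h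
    linarith

lemma trigB_vTrig_zero (r σ : ℝ) : vTrig r σ 0 = 0 := intervalIntegral.integral_same

lemma trigB_mono {r σ : ℝ} (hr : 0 < r) (hσ : σ = 1 ∨ σ = -1) {a b : ℝ} (hab : b ≤ a) :
    vTrig r σ b ≤ vTrig r σ a := by
  have h := (trigB_sub_bounds hr hσ hab).1
  have ht := trigB_tanh_pos hr
  nlinarith

set_option maxHeartbeats 2000000 in
/-- Trigonometric Bethe bounds of type B: two-sided estimates for the solutions of
the trigonometric type B critical-point system. -/
theorem trigB_bounds
    (n K L : ℕ) (hn : 1 ≤ n)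
    (α : ℝ) (hα : 0 < α) (ε : ℕ) (hε : ε = 0 ∨ ε = 1)
    (r : Fin K → ℝ) (σ : Fin K → ℝ) (s : Fin L → ℝ) (τ : Fin L → ℝ)
    (hr : ∀ k, 0 < r k) (hs : ∀ l, 0 < s l)
    (hσ : ∀ k, σ k = 1 ∨ σ k = -1) (hτ : ∀ l, τ l = 1 ∨ τ l = -1)
    (μ : Fin n → ℤ) (hμ : ∀ j j' : Fin n, j < j' → μ j' < μ j)
    (hμpos : ∀ j, 0 < μ j)
    (ξ : Fin n → ℝ)
    (hξ : ∀ j : Fin n,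
      2 * α * ξ j + (∑ k, vTrig (r k) (σ k) (ξ j)) +
      (∑ j' ∈ Finset.univ.erase j, ∑ l,
        (vTrig (s l) (τ l) (ξ j' + ξ j) - vTrig (s l) (τ l) (ξ j' - ξ j)))
      = 2 * π * ((μ j : ℝ) + (ε : ℝ) / 2))
    (κm κp : ℝ)
    (hκm : κm = (1 / 2) * (∑ k, (Real.tanh (r k / 2))⁻¹) +
      ((n : ℝ) - 1) * (∑ l, (Real.tanh (s l / 2))⁻¹))
    (hκp : κp = (1 / 2) * (∑ k, Real.tanh (r k / 2)) +
      ((n : ℝ) - 1) * (∑ l, Real.tanh (s l / 2))) :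
    (∀ j : Fin n,
      π * ((μ j : ℝ) + (ε : ℝ) / 2) / (α + κm) ≤ ξ j ∧
      ξ j ≤ π * ((μ j : ℝ) + (ε : ℝ) / 2) / (α + κp)) ∧
    (∀ j j' : Fin n, j < j' →
      π * ((μ j : ℝ) - (μ j' : ℝ)) / (α + κm) ≤ ξ j - ξ j' ∧
      ξ j - ξ j' ≤ π * ((μ j : ℝ) - (μ j' : ℝ)) / (α + κp)) := by
  have htk : ∀ k, 0 < Real.tanh (r k / 2) := fun k => trigB_tanh_pos (hr k)
  have htl : ∀ l, 0 < Real.tanh (s l / 2) := fun l => trigB_tanh_pos (hs l)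
  have hn1 : (1:ℝ) ≤ (n:ℝ) := by exact_mod_cast hn
  have hSk : 0 ≤ ∑ k, Real.tanh (r k / 2) := Finset.sum_nonneg fun k _ => (htk k).le
  have hSl : 0 ≤ ∑ l, Real.tanh (s l / 2) := Finset.sum_nonneg fun l _ => (htl l).le
  have hSk' : 0 ≤ ∑ k, (Real.tanh (r k / 2))⁻¹ :=
    Finset.sum_nonneg fun k _ => (inv_pos.mpr (htk k)).le
  have hSl' : 0 ≤ ∑ l, (Real.tanh (s l / 2))⁻¹ :=
    Finset.sum_nonneg fun l _ => (inv_pos.mpr (htl l)).le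
  have hκp0 : 0 ≤ κp := by rw [hκp]; nlinarith
  have hκm0 : 0 ≤ κm := by rw [hκm]; nlinarith
  have hαp : 0 < α + κp := by linarith
  have hαm : 0 < α + κm := by linarith
  have hπ := Real.pi_pos
  constructor
  · -- part 1
    intro j
    have hm1 : (1:ℝ) ≤ (μ j : ℝ) + (ε:ℝ)/2 := by
      have h1 : (1:ℤ) ≤ μ j := hμpos j
      have h2 : (1:ℝ) ≤ (μ j : ℝ) := by exact_mod_cast h1
      have hε0 : (0:ℝ) ≤ (ε:ℝ) := Nat.cast_nonneg ε
      linarith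
    have hx0 : 0 ≤ ξ j := by
      by_contra hcon
      push_neg at hcon
      have hS1 : ∑ k, vTrig (r k) (σ k) (ξ j) ≤ 0 := Finset.sum_nonpos fun k _ => by
        have h := trigB_mono (hr k) (hσ k) (le_of_lt hcon)
        rwa [trigB_vTrig_zero] at h
      have hS2 : (∑ j' ∈ Finset.univ.erase j, ∑ l,
          (vTrig (s l) (τ l) (ξ j' + ξ j) - vTrig (s l) (τ l) (ξ j' - ξ j))) ≤ 0 :=
        Finset.sum_nonpos fun j' _ => Finset.sum_nonpos fun l _ => by
          have h := trigB_mono (hs l) (hτ l) (show ξ j' + ξ j ≤ ξ j' - ξ j by linarith)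
          linarith
      have heq := hξ j
      nlinarith [mul_pos hα (show 0 < -ξ j by linarith),
        mul_nonneg hπ.le (show (0:ℝ) ≤ (μ j:ℝ) + (ε:ℝ)/2 - 1 by linarith)]
    have hS1lo : (∑ k, Real.tanh (r k / 2)) * ξ j ≤ ∑ k, vTrig (r k) (σ k) (ξ j) := by
      rw [Finset.sum_mul]
      refine Finset.sum_le_sum fun k _ => ?_
      have h := (trigB_sub_bounds (hr k) (hσ k) hx0).1
      rw [trigB_vTrig_zero] at h
      linarith
    have hS1hi : (∑ k, vTrig (r k) (σ k) (ξ j)) ≤ (∑ k, (Real.tanh (r k / 2))⁻¹) * ξ j := by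
      rw [Finset.sum_mul]
      refine Finset.sum_le_sum fun k _ => ?_
      have h := (trigB_sub_bounds (hr k) (hσ k) hx0).2
      rw [trigB_vTrig_zero] at h
      linarith
    have hcard : ((Finset.univ.erase j).card : ℝ) = (n:ℝ) - 1 := by
      rw [Finset.card_erase_of_mem (Finset.mem_univ j), Finset.card_univ, Fintype.card_fin,
        Nat.cast_pred (by omega)]
    have hS2lo : ((n:ℝ) - 1) * ((∑ l, Real.tanh (s l / 2)) * (2 * ξ j)) ≤
        ∑ j' ∈ Finset.univ.erase j, ∑ l,
          (vTrig (s l) (τ l) (ξ j' + ξ j) - vTrig (s l) (τ l) (ξ j' - ξ j)) := by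
      have hterm : ∀ j' : Fin n, (∑ l, Real.tanh (s l / 2)) * (2 * ξ j) ≤
          ∑ l, (vTrig (s l) (τ l) (ξ j' + ξ j) - vTrig (s l) (τ l) (ξ j' - ξ j)) := by
        intro j'
        rw [Finset.sum_mul]
        refine Finset.sum_le_sum fun l _ => ?_
        have h := (trigB_sub_bounds (hs l) (hτ l) (show ξ j' - ξ j ≤ ξ j' + ξ j by linarith)).1
        linarith
      calc ((n:ℝ) - 1) * ((∑ l, Real.tanh (s l / 2)) * (2 * ξ j))
          = ((Finset.univ.erase j).card : ℝ) * ((∑ l, Real.tanh (s l / 2)) * (2 * ξ j)) := by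
            rw [hcard]
        _ = ∑ _j' ∈ Finset.univ.erase j, ((∑ l, Real.tanh (s l / 2)) * (2 * ξ j)) := by
            rw [Finset.sum_const, nsmul_eq_mul]
        _ ≤ _ := Finset.sum_le_sum fun j' _ => hterm j'
    have hS2hi : (∑ j' ∈ Finset.univ.erase j, ∑ l,
          (vTrig (s l) (τ l) (ξ j' + ξ j) - vTrig (s l) (τ l) (ξ j' - ξ j))) ≤
        ((n:ℝ) - 1) * ((∑ l, (Real.tanh (s l / 2))⁻¹) * (2 * ξ j)) := by
      have hterm : ∀ j' : Fin n,
          (∑ l, (vTrig (s l) (τ l) (ξ j' + ξ j) - vTrig (s l) (τ l) (ξ j' - ξ j))) ≤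
          (∑ l, (Real.tanh (s l / 2))⁻¹) * (2 * ξ j) := by
        intro j'
        rw [Finset.sum_mul]
        refine Finset.sum_le_sum fun l _ => ?_
        have h := (trigB_sub_bounds (hs l) (hτ l) (show ξ j' - ξ j ≤ ξ j' + ξ j by linarith)).2
        linarith
      calc (∑ j' ∈ Finset.univ.erase j, ∑ l,
          (vTrig (s l) (τ l) (ξ j' + ξ j) - vTrig (s l) (τ l) (ξ j' - ξ j)))
          ≤ ∑ _j' ∈ Finset.univ.erase j, ((∑ l, (Real.tanh (s l / 2))⁻¹) * (2 * ξ j)) :=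
            Finset.sum_le_sum fun j' _ => hterm j'
        _ = ((n:ℝ) - 1) * ((∑ l, (Real.tanh (s l / 2))⁻¹) * (2 * ξ j)) := by
            rw [Finset.sum_const, nsmul_eq_mul, hcard]
    have heq := hξ j
    have hidp : 2*α*ξ j + (∑ k, Real.tanh (r k / 2))*ξ j
        + ((n:ℝ) - 1) * ((∑ l, Real.tanh (s l / 2)) * (2 * ξ j)) = 2*(α+κp)*ξ j := by
      rw [hκp]; ring
    have hidm : 2*α*ξ j + (∑ k, (Real.tanh (r k / 2))⁻¹)*ξ j
        + ((n:ℝ) - 1) * ((∑ l, (Real.tanh (s l / 2))⁻¹) * (2 * ξ j)) = 2*(α+κm)*ξ j := by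
      rw [hκm]; ring
    constructor
    · rw [div_le_iff₀ hαm]
      linarith [heq, hS1hi, hS2hi, hidm]
    · rw [le_div_iff₀ hαp]
      linarith [heq, hS1lo, hS2lo, hidp]
  · -- part 2
    intro j j' hjj
    have hne : j' ≠ j := (ne_of_lt hjj).symm
    have hne' : j ≠ j' := ne_of_lt hjj
    have hMint : μ j' + 1 ≤ μ j := hμ j j' hjj
    have hM1 : (1:ℝ) ≤ (μ j:ℝ) - (μ j':ℝ) := by
      have h : ((μ j' : ℝ) + 1 ≤ (μ j:ℝ)) := by exact_mod_cast hMint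
      linarith
    have hn2 : 2 ≤ n := by
      have h1 : (j:ℕ) < (j':ℕ) := hjj
      have h2 : (j':ℕ) < n := j'.isLt
      omega
    have hj'mem : j' ∈ Finset.univ.erase j := Finset.mem_erase.mpr ⟨hne, Finset.mem_univ _⟩
    have hjmem : j ∈ Finset.univ.erase j' := Finset.mem_erase.mpr ⟨hne', Finset.mem_univ _⟩
    have hAe : (Finset.univ.erase j').erase j = (Finset.univ.erase j).erase j' :=
      Finset.erase_right_comm
    have hcardA : (((Finset.univ.erase j).erase j').card : ℝ) = (n:ℝ) - 2 := by
      rw [Finset.card_erase_of_mem hj'mem, Finset.card_erase_of_mem (Finset.mem_univ j),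
        Finset.card_univ, Fintype.card_fin, show n - 1 - 1 = n - 2 from by omega,
        Nat.cast_sub hn2]
      norm_num
    have hsub : 2*α*(ξ j - ξ j')
        + (∑ k, (vTrig (r k) (σ k) (ξ j) - vTrig (r k) (σ k) (ξ j')))
        + ((∑ i ∈ Finset.univ.erase j, ∑ l,
            (vTrig (s l) (τ l) (ξ i + ξ j) - vTrig (s l) (τ l) (ξ i - ξ j)))
          - (∑ i ∈ Finset.univ.erase j', ∑ l,
            (vTrig (s l) (τ l) (ξ i + ξ j') - vTrig (s l) (τ l) (ξ i - ξ j'))))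
        = 2*π*((μ j:ℝ) - (μ j':ℝ)) := by
      have h1 := hξ j
      have h2 := hξ j'
      rw [Finset.sum_sub_distrib]
      linarith
    have hdecomp : (∑ i ∈ Finset.univ.erase j, ∑ l,
            (vTrig (s l) (τ l) (ξ i + ξ j) - vTrig (s l) (τ l) (ξ i - ξ j)))
          - (∑ i ∈ Finset.univ.erase j', ∑ l,
            (vTrig (s l) (τ l) (ξ i + ξ j') - vTrig (s l) (τ l) (ξ i - ξ j')))
        = (∑ i ∈ (Finset.univ.erase j).erase j',
            ((∑ l, (vTrig (s l) (τ l) (ξ i + ξ j) - vTrig (s l) (τ l) (ξ i - ξ j)))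
            - (∑ l, (vTrig (s l) (τ l) (ξ i + ξ j') - vTrig (s l) (τ l) (ξ i - ξ j')))))
          + ((∑ l, (vTrig (s l) (τ l) (ξ j' + ξ j) - vTrig (s l) (τ l) (ξ j' - ξ j)))
            - (∑ l, (vTrig (s l) (τ l) (ξ j + ξ j') - vTrig (s l) (τ l) (ξ j - ξ j')))) := by
      rw [← Finset.sum_erase_add (Finset.univ.erase j) _ hj'mem,
          ← Finset.sum_erase_add (Finset.univ.erase j') _ hjmem, hAe]
      simp only [Finset.sum_sub_distrib]
      ring
    have hd0 : 0 ≤ ξ j - ξ j' := by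
      by_contra hcon
      push_neg at hcon
      have hK0 : (∑ k, (vTrig (r k) (σ k) (ξ j) - vTrig (r k) (σ k) (ξ j'))) ≤ 0 :=
        Finset.sum_nonpos fun k _ => by
          have h := trigB_mono (hr k) (hσ k) (show ξ j ≤ ξ j' by linarith)
          linarith
      have hA0 : (∑ i ∈ (Finset.univ.erase j).erase j',
            ((∑ l, (vTrig (s l) (τ l) (ξ i + ξ j) - vTrig (s l) (τ l) (ξ i - ξ j)))
            - (∑ l, (vTrig (s l) (τ l) (ξ i + ξ j') - vTrig (s l) (τ l) (ξ i - ξ j'))))) ≤ 0 :=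
        Finset.sum_nonpos fun i _ => by
          rw [← Finset.sum_sub_distrib]
          refine Finset.sum_nonpos fun l _ => ?_
          have h1 := trigB_mono (hs l) (hτ l) (show ξ i + ξ j ≤ ξ i + ξ j' by linarith)
          have h2 := trigB_mono (hs l) (hτ l) (show ξ i - ξ j' ≤ ξ i - ξ j by linarith)
          linarith
      have hD0 : ((∑ l, (vTrig (s l) (τ l) (ξ j' + ξ j) - vTrig (s l) (τ l) (ξ j' - ξ j)))
            - (∑ l, (vTrig (s l) (τ l) (ξ j + ξ j') - vTrig (s l) (τ l) (ξ j - ξ j')))) ≤ 0 := by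
        rw [← Finset.sum_sub_distrib]
        refine Finset.sum_nonpos fun l _ => ?_
        have hveq : vTrig (s l) (τ l) (ξ j' + ξ j) = vTrig (s l) (τ l) (ξ j + ξ j') := by
          rw [add_comm]
        have h := trigB_mono (hs l) (hτ l) (show ξ j - ξ j' ≤ ξ j' - ξ j by linarith)
        linarith
      rw [hdecomp] at hsub
      linarith [hsub, hK0, hA0, hD0,
        mul_le_mul_of_nonneg_left hM1 hπ.le,
        mul_pos hα (show 0 < ξ j' - ξ j by linarith)]
    -- sandwich
    have hKlo : (∑ k, Real.tanh (r k / 2)) * (ξ j - ξ j') ≤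
        ∑ k, (vTrig (r k) (σ k) (ξ j) - vTrig (r k) (σ k) (ξ j')) := by
      rw [Finset.sum_mul]
      exact Finset.sum_le_sum fun k _ => (trigB_sub_bounds (hr k) (hσ k) (by linarith)).1
    have hKhi : (∑ k, (vTrig (r k) (σ k) (ξ j) - vTrig (r k) (σ k) (ξ j'))) ≤
        (∑ k, (Real.tanh (r k / 2))⁻¹) * (ξ j - ξ j') := by
      rw [Finset.sum_mul]
      exact Finset.sum_le_sum fun k _ => (trigB_sub_bounds (hr k) (hσ k) (by linarith)).2
    have hAlo : ((n:ℝ) - 2) * ((∑ l, Real.tanh (s l / 2)) * (2 * (ξ j - ξ j'))) ≤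
        ∑ i ∈ (Finset.univ.erase j).erase j',
            ((∑ l, (vTrig (s l) (τ l) (ξ i + ξ j) - vTrig (s l) (τ l) (ξ i - ξ j)))
            - (∑ l, (vTrig (s l) (τ l) (ξ i + ξ j') - vTrig (s l) (τ l) (ξ i - ξ j')))) := by
      have hterm : ∀ i : Fin n, (∑ l, Real.tanh (s l / 2)) * (2 * (ξ j - ξ j')) ≤
          ((∑ l, (vTrig (s l) (τ l) (ξ i + ξ j) - vTrig (s l) (τ l) (ξ i - ξ j)))
            - (∑ l, (vTrig (s l) (τ l) (ξ i + ξ j') - vTrig (s l) (τ l) (ξ i - ξ j')))) := by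
        intro i
        rw [← Finset.sum_sub_distrib, Finset.sum_mul]
        refine Finset.sum_le_sum fun l _ => ?_
        have h1 := (trigB_sub_bounds (hs l) (hτ l)
          (show ξ i + ξ j' ≤ ξ i + ξ j by linarith)).1
        have h2 := (trigB_sub_bounds (hs l) (hτ l)
          (show ξ i - ξ j ≤ ξ i - ξ j' by linarith)).1
        linarith
      calc ((n:ℝ) - 2) * ((∑ l, Real.tanh (s l / 2)) * (2 * (ξ j - ξ j')))
          = ∑ _i ∈ (Finset.univ.erase j).erase j',
              ((∑ l, Real.tanh (s l / 2)) * (2 * (ξ j - ξ j'))) := by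
            rw [Finset.sum_const, nsmul_eq_mul, hcardA]
        _ ≤ _ := Finset.sum_le_sum fun i _ => hterm i
    have hAhi : (∑ i ∈ (Finset.univ.erase j).erase j',
            ((∑ l, (vTrig (s l) (τ l) (ξ i + ξ j) - vTrig (s l) (τ l) (ξ i - ξ j)))
            - (∑ l, (vTrig (s l) (τ l) (ξ i + ξ j') - vTrig (s l) (τ l) (ξ i - ξ j'))))) ≤
        ((n:ℝ) - 2) * ((∑ l, (Real.tanh (s l / 2))⁻¹) * (2 * (ξ j - ξ j'))) := by
      have hterm : ∀ i : Fin n,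
          ((∑ l, (vTrig (s l) (τ l) (ξ i + ξ j) - vTrig (s l) (τ l) (ξ i - ξ j)))
            - (∑ l, (vTrig (s l) (τ l) (ξ i + ξ j') - vTrig (s l) (τ l) (ξ i - ξ j')))) ≤
          (∑ l, (Real.tanh (s l / 2))⁻¹) * (2 * (ξ j - ξ j')) := by
        intro i
        rw [← Finset.sum_sub_distrib, Finset.sum_mul]
        refine Finset.sum_le_sum fun l _ => ?_
        have h1 := (trigB_sub_bounds (hs l) (hτ l)
          (show ξ i + ξ j' ≤ ξ i + ξ j by linarith)).2
        have h2 := (trigB_sub_bounds (hs l) (hτ l)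
          (show ξ i - ξ j ≤ ξ i - ξ j' by linarith)).2
        linarith
      calc (∑ i ∈ (Finset.univ.erase j).erase j',
            ((∑ l, (vTrig (s l) (τ l) (ξ i + ξ j) - vTrig (s l) (τ l) (ξ i - ξ j)))
            - (∑ l, (vTrig (s l) (τ l) (ξ i + ξ j') - vTrig (s l) (τ l) (ξ i - ξ j')))))
          ≤ ∑ _i ∈ (Finset.univ.erase j).erase j',
              ((∑ l, (Real.tanh (s l / 2))⁻¹) * (2 * (ξ j - ξ j'))) :=
            Finset.sum_le_sum fun i _ => hterm i
        _ = ((n:ℝ) - 2) * ((∑ l, (Real.tanh (s l / 2))⁻¹) * (2 * (ξ j - ξ j'))) := by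
            rw [Finset.sum_const, nsmul_eq_mul, hcardA]
    have hDlo : (∑ l, Real.tanh (s l / 2)) * (2 * (ξ j - ξ j')) ≤
        ((∑ l, (vTrig (s l) (τ l) (ξ j' + ξ j) - vTrig (s l) (τ l) (ξ j' - ξ j)))
            - (∑ l, (vTrig (s l) (τ l) (ξ j + ξ j') - vTrig (s l) (τ l) (ξ j - ξ j')))) := by
      rw [← Finset.sum_sub_distrib, Finset.sum_mul]
      refine Finset.sum_le_sum fun l _ => ?_
      have hveq : vTrig (s l) (τ l) (ξ j' + ξ j) = vTrig (s l) (τ l) (ξ j + ξ j') := by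
        rw [add_comm]
      have h := (trigB_sub_bounds (hs l) (hτ l)
        (show ξ j' - ξ j ≤ ξ j - ξ j' by linarith)).1
      linarith
    have hDhi : ((∑ l, (vTrig (s l) (τ l) (ξ j' + ξ j) - vTrig (s l) (τ l) (ξ j' - ξ j)))
            - (∑ l, (vTrig (s l) (τ l) (ξ j + ξ j') - vTrig (s l) (τ l) (ξ j - ξ j')))) ≤
        (∑ l, (Real.tanh (s l / 2))⁻¹) * (2 * (ξ j - ξ j')) := by
      rw [← Finset.sum_sub_distrib, Finset.sum_mul]
      refine Finset.sum_le_sum fun l _ => ?_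
      have hveq : vTrig (s l) (τ l) (ξ j' + ξ j) = vTrig (s l) (τ l) (ξ j + ξ j') := by
        rw [add_comm]
      have h := (trigB_sub_bounds (hs l) (hτ l)
        (show ξ j' - ξ j ≤ ξ j - ξ j' by linarith)).2
      linarith
    rw [hdecomp] at hsub
    have hidp : 2*α*(ξ j - ξ j') + (∑ k, Real.tanh (r k / 2))*(ξ j - ξ j')
        + (((n:ℝ) - 2) * ((∑ l, Real.tanh (s l / 2)) * (2 * (ξ j - ξ j')))
          + (∑ l, Real.tanh (s l / 2)) * (2 * (ξ j - ξ j')))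
        = 2*(α+κp)*(ξ j - ξ j') := by
      rw [hκp]; ring
    have hidm : 2*α*(ξ j - ξ j') + (∑ k, (Real.tanh (r k / 2))⁻¹)*(ξ j - ξ j')
        + (((n:ℝ) - 2) * ((∑ l, (Real.tanh (s l / 2))⁻¹) * (2 * (ξ j - ξ j')))
          + (∑ l, (Real.tanh (s l / 2))⁻¹) * (2 * (ξ j - ξ j')))
        = 2*(α+κm)*(ξ j - ξ j') := by
      rw [hκm]; ring
    constructor
    · rw [div_le_iff₀ hαm]
      linarith [hsub, hKhi, hAhi, hDhi, hidm]
    · rw [le_div_iff₀ hαp]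
      linarith [hsub, hKlo, hAlo, hDlo, hidp]
end
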